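/- arXiv:2305.03168 — 10 statements merged into one kernel-verified Lean document; each statement's English description precedes it below -/
import Mathlib

section
/- For every integer n ≥ 2, the integer 2^n − 1 is never a perfect power; that is, there are no integers x and m ≥ 2 with 2^n − 1 = x^m. -/
theorem no_perfect_power_two_pow_sub_one (n : ℕ) (hn : 2 ≤ n) :
    ¬ ∃ (x : ℤ) (m : ℕ), 2 ≤ m ∧ (2 : ℤ) ^ n - 1 = x ^ m := by
  rintro ⟨x, m, hm, h⟩
  have h4le : (4 : ℤ) ≤ 2 ^ n := by
    calc (4:ℤ) = 2 ^ 2 := by norm_num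
    _ ≤ 2 ^ n := pow_le_pow_right₀ (by norm_num) hn
  have hxodd : Odd x := by
    have hodd : Odd (x ^ m) := by
      rw [← h]
      refine Even.sub_odd ?_ odd_one
      exact ⟨2 ^ (n-1), by rw [← two_mul, ← pow_succ']; congr 1; omega⟩
    rcases Int.even_or_odd x with he | hoo
    · exact absurd ((Int.even_pow).mpr ⟨he, by omega⟩)
        (Int.not_even_iff_odd.mpr hodd)
    · exact hoo
  rcases Nat.even_or_odd m with he | ho
  · -- m even: contradiction mod 4
    obtain ⟨k, hk⟩ := he
    have hmap := congrArg (fun z : ℤ => (z : ZMod 4)) h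
    push_cast at hmap
    have h40 : (4 : ZMod 4) = 0 := by decide
    have hx2 : ((x : ZMod 4)) ^ 2 = 1 := by
      obtain ⟨t, ht⟩ := hxodd
      subst ht
      push_cast
      linear_combination ((t : ZMod 4) ^ 2 + t) * h40
    have hxm : ((x : ZMod 4)) ^ m = 1 := by
      rw [hk, ← two_mul, pow_mul, hx2, one_pow]
    have h2n : ((2 : ZMod 4)) ^ n = 0 := by
      obtain ⟨j, hj⟩ := Nat.exists_eq_add_of_le hn
      have h22 : ((2 : ZMod 4)) ^ 2 = 0 := by decide
      rw [hj, pow_add, h22, zero_mul]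
    rw [hxm, h2n] at hmap
    revert hmap
    decide
  · -- m odd
    have hx1 : 1 ≤ x := by
      by_contra hle
      push_neg at hle
      have hx0 : x ≤ 0 := by omega
      have : x ^ m ≤ 0 := ho.pow_nonpos hx0
      linarith
    have hx2 : 2 ≤ x := by
      by_contra hle
      push_neg at hle
      have : x = 1 := by omega
      subst this
      simp at h
      linarith
    set S : ℤ := ∑ i ∈ Finset.range m, (-x) ^ i with hSdef
    have hgs := geom_sum_mul (-x) m
    rw [ho.neg_pow] at hgs
    have hS : S * (x + 1) = x ^ m + 1 := by linear_combination -hgs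
    have hS2 : S * (x + 1) = 2 ^ n := by rw [hS]; linarith
    have hSodd : Odd S := by
      rw [← Int.not_even_iff_odd]
      intro hev
      have hz : (S : ZMod 2) = 0 :=
        (ZMod.intCast_zmod_eq_zero_iff_dvd S 2).mpr (by exact_mod_cast hev.two_dvd)
      have h2z : (2 : ZMod 2) = 0 := by decide
      have hcast : (S : ZMod 2) = ∑ i ∈ Finset.range m, (-(x : ZMod 2)) ^ i := by
        rw [hSdef]
        push_cast
        rfl
      have hx1' : (-(x : ZMod 2)) = 1 := by
        obtain ⟨t, ht⟩ := hxodd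
        rw [ht]
        push_cast
        linear_combination (-(t : ZMod 2) - 1) * h2z
      have hone : (S : ZMod 2) = 1 := by
        rw [hcast, hx1']
        simp only [one_pow, Finset.sum_const, Finset.card_range, nsmul_eq_mul, mul_one]
        rw [← ZMod.natCast_mod, Nat.odd_iff.mp ho]
        decide
      rw [hz] at hone
      exact absurd hone (by decide)
    have hSdvd : S ∣ (2:ℤ) ^ n := ⟨x + 1, hS2.symm⟩
    have hnd : S.natAbs ∣ 2 ^ n := by
      have h1 := Int.natAbs_dvd_natAbs.mpr hSdvd
      rw [Int.natAbs_pow] at h1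
      exact_mod_cast h1
    obtain ⟨k, hkn, hkeq⟩ := (Nat.dvd_prime_pow Nat.prime_two).mp hnd
    have hSabs : S.natAbs = 1 := by
      have hoddS : Odd S.natAbs := Int.natAbs_odd.mpr hSodd
      rw [hkeq] at hoddS
      rcases k with _ | k
      · simpa using hkeq
      · exfalso
        rw [Nat.odd_iff] at hoddS
        have : 2 ∣ 2 ^ (k + 1) := dvd_pow_self 2 (Nat.succ_ne_zero k)
        omega
    have hScases : S = 1 ∨ S = -1 := Int.natAbs_eq_iff.mp hSabs |>.imp id id
    have hSone : S = 1 := by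
      rcases hScases with h1 | h1
      · exact h1
      · exfalso
        rw [h1] at hS2
        linarith
    rw [hSone, one_mul] at hS2
    have hxm : x ^ m = x := by rw [← h, ← hS2]; ring
    have : x ^ 2 ≤ x ^ m := pow_le_pow_right₀ (by linarith) hm
    nlinarith
end

section
/- For every positive integer n, there is no positive integer x with x^2 − 1 = 2^n·(2^(2n+1) − 1). -/
/-!
Split on the parity of `n`. For even `n`, reducing modulo `3` (where `2 = -1`) turns the equation
into `x² = -1`, and `-1` is not a square modulo the prime `3 ≡ 3 (mod 4)`. For odd `n`, put
`m = 2^((3n+1)/2)`; then `x² = m² - 2ⁿ + 1`, which lies strictly between `(m - 1)²` and `m²`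
because `1 < 2ⁿ < 2m`.
-/

theorem Int.not_exists_sq' {m n : ℤ} (hl : m ^ 2 < n) (hr : n < (m + 1) ^ 2) :
    ¬∃ t, t ^ 2 = n := by
  rintro ⟨t, rfl⟩
  have hm : 0 ≤ m + 1 := by nlinarith
  have hlt : |t| < m + 1 := lt_of_pow_lt_pow_left₀ 2 hm (by rwa [sq_abs])
  have hgt : m < |t| := lt_of_pow_lt_pow_left₀ 2 (abs_nonneg t) (by rwa [sq_abs])
  omega

theorem sq_sub_one_ne_of_even {n : ℕ} (hn : Even n) (x : ℤ) :
    x ^ 2 - 1 ≠ 2 ^ n * (2 ^ (2 * n + 1) - 1) := by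
  intro h
  have hmod3 := congrArg (Int.cast : ℤ → ZMod 3) h
  push_cast at hmod3
  rw [show (2 : ZMod 3) = -1 from rfl, hn.neg_one_pow,
    (odd_two_mul_add_one n).neg_one_pow] at hmod3
  exact ZMod.mod_four_ne_three_of_sq_eq_neg_one (p := 3) (y := x)
    (by linear_combination hmod3) rfl

theorem sq_sub_one_ne_of_odd {n : ℕ} (hn : Odd n) (x : ℤ) :
    x ^ 2 - 1 ≠ 2 ^ n * (2 ^ (2 * n + 1) - 1) := by
  obtain ⟨k, rfl⟩ := hn
  set m : ℤ := 2 ^ (3 * k + 2)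
  have hlo : (1 : ℤ) < 2 ^ (2 * k + 1) := one_lt_pow₀ one_lt_two (by omega)
  have hhi : (2 : ℤ) ^ (2 * k + 1) < 2 * m := by
    rw [← pow_succ']
    exact pow_lt_pow_right₀ one_lt_two (by omega)
  intro h
  have hx : x ^ 2 = m ^ 2 - 2 ^ (2 * k + 1) + 1 := by linear_combination h
  refine Int.not_exists_sq' (m := m - 1) ?_ ?_ ⟨x, hx⟩ <;> nlinarith

theorem no_sol_sq_sub_one_general (n : ℕ) :
    ¬ ∃ x : ℤ, 0 < x ∧ x ^ 2 - 1 = 2 ^ n * (2 ^ (2 * n + 1) - 1) := by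
  rintro ⟨x, -, hx⟩
  rcases Nat.even_or_odd n with hn | hn
  · exact sq_sub_one_ne_of_even hn x hx
  · exact sq_sub_one_ne_of_odd hn x hx

theorem no_sol_sq_sub_one (n : ℕ) (hn : 0 < n) :
    ¬ ∃ x : ℤ, 0 < x ∧ x ^ 2 - 1 = 2 ^ n * (2 ^ (2 * n + 1) - 1) :=
  no_sol_sq_sub_one_general n
end

section
/- For every positive integer n, there is no positive integer x with x(x−1)/2 = 2^n·(2^(2n+1) − 1). -/
theorem no_sol_triangular (n : ℕ) (hn : 0 < n) :
    ¬ ∃ x : ℤ, 0 < x ∧ x * (x - 1) / 2 = 2 ^ n * (2 ^ (2 * n + 1) - 1) := by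
  rintro ⟨x, hx, h⟩
  have h2 : (2:ℤ) ∣ x * (x - 1) := (Int.even_mul_pred_self x).two_dvd
  obtain ⟨k, hk⟩ := h2
  rw [hk] at h
  rw [Int.mul_ediv_cancel_left _ (by norm_num)] at h
  have heq : x * (x - 1) = 2 * (2 ^ n * (2 ^ (2 * n + 1) - 1)) := by rw [hk, h]
  have hy : (2*x-1)^2 = 8 * 2^n * 2^(2*n+1) - 8 * 2^n + 1 := by
    linear_combination 4 * heq
  rcases Nat.even_or_odd n with ⟨m, hm⟩ | ⟨m, hm⟩
  · -- n = m + m, m ≥ 1 : strictly between consecutive squares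
    subst hm
    have hm1 : 1 ≤ m := by omega
    set y : ℤ := 2*x - 1 with hydef
    set t : ℤ := 2^m with htdef
    have e1 : (2:ℤ)^(m+m) = t^2 := by rw [htdef, ← pow_mul]; congr 1; ring
    have e2 : (2:ℤ)^(2*(m+m)+1) = 2*t^4 := by
      rw [htdef, ← pow_mul, show 2*(m+m)+1 = m*4+1 by ring, pow_succ]; ring
    rw [e1, e2] at hy
    have hy' : y^2 = 16*t^6 - 8*t^2 + 1 := by linear_combination hy
    have ht : (2:ℤ) ≤ t := by
      rw [htdef]
      calc (2:ℤ) = 2^1 := by norm_num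
        _ ≤ 2^m := by exact pow_le_pow_right₀ (by norm_num) hm1
    have hy1 : 1 ≤ y := by omega
    have ht2 : 4 ≤ t^2 := by nlinarith [ht]
    have ht23 : t^2 < t^3 := by nlinarith [ht, sq_nonneg t]
    have h1 : y < 4*t^3 := by
      refine lt_of_pow_lt_pow_left₀ 2 (by positivity) ?_
      have : y^2 < (4*t^3)^2 := by nlinarith [hy', ht2]
      exact this
    have h2 : 4*t^3 - 1 < y := by
      refine lt_of_pow_lt_pow_left₀ 2 (by omega) ?_
      have : (4*t^3-1)^2 < y^2 := by nlinarith [hy', ht23]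
      exact this
    have : (4:ℤ)*t^3 - 1 < 4*t^3 := by linarith
    omega
  · -- n = 2m+1 : (2x-1)^2 ≡ 2 mod 3, impossible
    subst hm
    set y : ℤ := 2*x - 1 with hydef
    have e1 : (2:ℤ)^(2*m+1) = 2*4^m := by
      rw [pow_succ, pow_mul]; norm_num; ring
    have e2 : (2:ℤ)^(2*(2*m+1)+1) = 8*(4^m)^2 := by
      rw [show 2*(2*m+1)+1 = (2*m)*2+3 by ring, pow_add, pow_mul, pow_mul]
      norm_num; ring
    rw [e1, e2] at hy
    have hy' : y^2 = 128*(4^m)^3 - 16*4^m + 1 := by linear_combination hy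
    have h4 : (4:ℤ) ≡ 1 [ZMOD 3] := by decide
    have h4m : (4:ℤ)^m ≡ 1 [ZMOD 3] := by simpa using h4.pow m
    have hmod : y^2 ≡ 2 [ZMOD 3] := by
      calc y^2 = 128*(4^m)^3 - 16*4^m + 1 := hy'
        _ ≡ 128*1^3 - 16*1 + 1 [ZMOD 3] :=
          (((Int.ModEq.refl 128).mul (h4m.pow 3)).sub
            ((Int.ModEq.refl 16).mul h4m)).add (Int.ModEq.refl 1)
        _ ≡ 2 [ZMOD 3] := by decide
    have hz : ((y : ZMod 3))^2 = 2 := by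
      have h' := (ZMod.intCast_eq_intCast_iff _ _ _).mpr hmod
      push_cast at h'
      exact h'
    have hall : ∀ z : ZMod 3, z^2 ≠ 2 := by decide
    exact hall _ hz
end

section
/- For every integer n ≥ 2, there is no positive integer x with x(x−1)/2 − 1 = 2^n·(2^(2n+1) − 1). -/
theorem no_sol_triangular_sub_one (n : ℕ) (hn : 2 ≤ n) :
    ¬ ∃ x : ℤ, 0 < x ∧ x * (x - 1) / 2 - 1 = 2 ^ n * (2 ^ (2 * n + 1) - 1) := by
  rintro ⟨x, hx, h⟩
  set B : ℤ := 2 ^ n with hB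
  have hB4 : 4 ≤ B := by
    calc (4:ℤ) = 2 ^ 2 := by norm_num
    _ ≤ 2 ^ n := pow_le_pow_right₀ (by norm_num) hn
  have hB0 : (0:ℤ) ≤ B := by linarith
  have hBeven : (2:ℤ) ∣ B := by
    rw [hB]
    exact dvd_pow_self 2 (by omega)
  have hRHS : (2:ℤ) ^ n * (2 ^ (2 * n + 1) - 1) = B * (2 * B ^ 2 - 1) := by
    rw [hB, show 2 * n + 1 = n * 2 + 1 from by ring, pow_succ, pow_mul]; ring
  rw [hRHS] at h
  set M : ℤ := 2 * B ^ 2 - 1 with hM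
  clear_value M
  clear_value B
  have hModd : ¬ (2:ℤ) ∣ M := by
    rintro ⟨c, hc⟩
    have : (2:ℤ) ∣ 1 := ⟨B ^ 2 - c, by linarith⟩
    norm_num at this
  have hdvd2 : (2:ℤ) ∣ x * (x - 1) := by
    rcases Int.even_or_odd x with he | ho
    · exact he.mul_right _ |>.two_dvd
    · have : Even (x - 1) := by
        obtain ⟨k, hk⟩ := ho
        exact ⟨k, by omega⟩
      exact (this.mul_left _).two_dvd
  have key : x * (x - 1) = 2 * (B * M) + 2 := by
    set e := x * (x - 1) with he
    set D := B * M with hD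
    omega
  have keq : (x - 2) * (x + 1) = 2 * B * M := by nlinarith [key]
  have hMpos : 1 ≤ M := by nlinarith
  have hprod : 0 < (x - 2) * (x + 1) := by
    rw [keq]; positivity
  have hx3 : 3 ≤ x := by nlinarith [hprod]
  have h2B : (2:ℤ) ^ (n + 1) = 2 * B := by rw [hB, pow_succ]; ring
  rcases Int.even_or_odd x with he | ho
  · -- x even: x+1 odd, 2^(n+1) ∣ x-2
    have hcop : IsCoprime ((2:ℤ) ^ (n + 1)) (x + 1) := by
      apply IsCoprime.pow_left
      obtain ⟨k, hk⟩ : Odd (x + 1) := by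
        obtain ⟨m, hm⟩ := he
        exact ⟨m, by omega⟩
      exact ⟨-k, 1, by linarith⟩
    have hdvd : (2:ℤ) ^ (n + 1) ∣ (x - 2) := by
      apply hcop.dvd_of_dvd_mul_right
      exact ⟨M, by rw [keq, h2B]⟩
    obtain ⟨u, hu⟩ := hdvd
    rw [h2B] at hu
    have hueq : u * (2 * B * u + 3) = M := by
      have h2Bne : (2 * B : ℤ) ≠ 0 := by positivity
      apply mul_left_cancel₀ h2Bne
      calc 2 * B * (u * (2 * B * u + 3)) = (2 * B * u) * (2 * B * u + 3) := by ring
      _ = (x - 2) * (x + 1) := by rw [← hu]; ring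
      _ = 2 * B * M := keq
    have hupos : 1 ≤ u := by nlinarith [hu, hx3, hB4]
    have huodd : Odd u := by
      rcases Int.even_or_odd u with ⟨k, hk⟩ | hod
      · exact absurd ⟨k * (2 * B * u + 3), by rw [← hueq, hk]; ring⟩ hModd
      · exact hod
    obtain ⟨k, hk⟩ := huodd
    rcases le_or_gt (u ^ 2) (B - 1) with hle | hgt
    · nlinarith [hueq, hupos, hB4, sq_nonneg (3 * u - 2 * B + 2),
        mul_nonneg hB0 (by linarith : (0:ℤ) ≤ B - 1 - u ^ 2)]
    · have hne : u ^ 2 ≠ B := by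
        intro hE
        have h2u : (2:ℤ) ∣ u ^ 2 := by rw [hE]; exact hBeven
        have := Int.prime_two.dvd_of_dvd_pow h2u
        obtain ⟨c, hc⟩ := this
        omega
      have hBp1 : B + 1 ≤ u ^ 2 :=
        Int.lt_iff_add_one_le.mp (lt_of_le_of_ne (by linarith) (Ne.symm hne))
      nlinarith [hueq, hupos, hB4,
        mul_nonneg hB0 (by linarith : (0:ℤ) ≤ u ^ 2 - B - 1)]
  · -- x odd: x-2 odd, 2^(n+1) ∣ x+1
    have hcop : IsCoprime ((2:ℤ) ^ (n + 1)) (x - 2) := by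
      apply IsCoprime.pow_left
      obtain ⟨k, hk⟩ := ho
      exact ⟨-(k - 1), 1, by linarith⟩
    have hdvd : (2:ℤ) ^ (n + 1) ∣ (x + 1) := by
      apply hcop.dvd_of_dvd_mul_right
      exact ⟨M, by rw [mul_comm (x + 1) (x - 2), keq, h2B]⟩
    obtain ⟨u, hu⟩ := hdvd
    rw [h2B] at hu
    have hueq : u * (2 * B * u - 3) = M := by
      have h2Bne : (2 * B : ℤ) ≠ 0 := by positivity
      apply mul_left_cancel₀ h2Bne
      calc 2 * B * (u * (2 * B * u - 3)) = (2 * B * u - 3) * (2 * B * u) := by ring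
      _ = (x - 2) * (x + 1) := by rw [← hu]; ring_nf
      _ = 2 * B * M := keq
    have hupos : 1 ≤ u := by nlinarith [hu, hx3, hB4]
    have huodd : Odd u := by
      rcases Int.even_or_odd u with ⟨k, hk⟩ | hod
      · exact absurd ⟨k * (2 * B * u - 3), by rw [← hueq, hk]; ring⟩ hModd
      · exact hod
    obtain ⟨k, hk⟩ := huodd
    rcases le_or_gt (u ^ 2) (B - 1) with hle | hgt
    · nlinarith [hueq, hupos, hB4,
        mul_nonneg hB0 (by linarith : (0:ℤ) ≤ B - 1 - u ^ 2)]
    · have hne : u ^ 2 ≠ B := by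
        intro hE
        have h2u : (2:ℤ) ∣ u ^ 2 := by rw [hE]; exact hBeven
        have := Int.prime_two.dvd_of_dvd_pow h2u
        obtain ⟨c, hc⟩ := this
        omega
      have hBp1 : B + 1 ≤ u ^ 2 :=
        Int.lt_iff_add_one_le.mp (lt_of_le_of_ne (by linarith) (Ne.symm hne))
      set p : ℤ := u ^ 2 - B - 1 with hp
      have hp0 : 0 ≤ p := by linarith
      have h3u : 3 * u = 2 * B * p + 2 * B + 1 := by
        have heq2 : 2 * B * u ^ 2 - 3 * u = 2 * B ^ 2 - 1 := by
          linear_combination hueq + hM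
        linear_combination (-1) * heq2 - 2 * B * hp
      have h9 : (2 * B * p + 2 * B + 1) ^ 2 = 9 * (p + B + 1) := by
        rw [← h3u]
        have hup : u ^ 2 = p + B + 1 := by rw [hp]; ring
        linear_combination 9 * hup
      nlinarith [h9, hp0, hB4,
        mul_nonneg (mul_nonneg (mul_nonneg hB0 hB0) hp0) hp0,
        mul_nonneg (mul_nonneg hB0 hB0) hp0,
        mul_nonneg hB0 hp0,
        mul_nonneg (by linarith : (0:ℤ) ≤ B - 4) hp0,
        mul_nonneg (by linarith : (0:ℤ) ≤ B - 4) hB0]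
end

section
/- Let m and n be coprime positive integers and let a be an integer with 0 ≤ a ≤ m−1. Then the number N_a of integers k with 1 ≤ k ≤ n, gcd(k,n) = 1, and k ≡ a (mod m) satisfies |N_a − φ(n)/m| < 2^{ω(n)}, where φ is Euler's totient function and ω(n) is the number of distinct prime divisors of n. -/
open Finset ArithmeticFunction

private lemma countIcc' (N m r : ℕ) (hm : 0 < m) (hr : r < m) :
    |(((Finset.Icc 1 N).filter (fun j => j % m = r)).card : ℚ) - N / m| < 1 := by
  have h2 : (Finset.Icc 1 N).filter (fun j => j % m = r)
      = (Finset.Ioc 0 N).filter (· ≡ r [MOD m]) := by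
    rw [show Finset.Icc 1 N = Finset.Ioc 0 N from rfl]
    apply Finset.filter_congr
    intro x _
    simp [Nat.ModEq, Nat.mod_eq_of_lt hr]
  rw [h2]
  have hc := Nat.Ioc_filter_modEq_card 0 N hm r
  have hm' : (0:ℚ) < m := by exact_mod_cast hm
  set x : ℚ := (((N:ℕ):ℚ) - (r:ℕ)) / ((m:ℕ):ℚ) with hx
  set y : ℚ := (((0:ℕ):ℚ) - (r:ℕ)) / ((m:ℕ):ℚ) with hy
  have hyx : ⌊y⌋ ≤ ⌊x⌋ := by
    apply Int.floor_le_floor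
    rw [hx, hy]
    gcongr
    exact N.zero_le
  rw [max_eq_left (by omega)] at hc
  have hcq : ((((Finset.Ioc 0 N).filter (· ≡ r [MOD m])).card : ℚ)) = (⌊x⌋ : ℚ) - (⌊y⌋ : ℚ) := by
    exact_mod_cast congrArg (fun z : ℤ => (z : ℚ)) hc
  rw [hcq]
  have h3 : (N:ℚ)/m = x - y := by rw [hx, hy]; ring
  have f1 := Int.floor_le x
  have f2 := Int.floor_le y
  have f3 := Int.sub_one_lt_floor x
  have f4 := Int.sub_one_lt_floor y
  rw [h3, abs_lt]
  constructor <;> linarith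

private lemma card_dvd_mod' (n m d a : ℕ) (hd : 0 < d) :
    ((Finset.Icc 1 n).filter (fun k => k % m = a ∧ d ∣ k)).card
      = ((Finset.Icc 1 (n/d)).filter (fun j => (d*j) % m = a)).card := by
  apply Finset.card_bij' (fun k _ => k / d) (fun j _ => d * j)
  · intro k hk
    simp only [Finset.mem_filter, Finset.mem_Icc] at hk ⊢
    obtain ⟨⟨h1, h2⟩, hmod, hdvd⟩ := hk
    have hk' : d * (k / d) = k := Nat.mul_div_cancel' hdvd
    refine ⟨⟨?_, Nat.div_le_div_right h2⟩, by rw [hk']; exact hmod⟩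
    rw [Nat.one_le_div_iff hd]
    exact Nat.le_of_dvd (by omega) hdvd
  · intro j hj
    simp only [Finset.mem_filter, Finset.mem_Icc] at hj ⊢
    obtain ⟨⟨h1, h2⟩, hmod⟩ := hj
    exact ⟨⟨Nat.mul_pos hd h1, by rw [mul_comm]; exact (Nat.le_div_iff_mul_le hd).mp h2⟩,
      hmod, Dvd.intro _ rfl⟩
  · intro k hk
    simp only [Finset.mem_filter] at hk
    exact Nat.mul_div_cancel' hk.2.2
  · intro j _
    exact Nat.mul_div_cancel_left j hd

private lemma residue_shift' (m d a : ℕ) (hm : 0 < m) (hdm : Nat.Coprime d m) (ha : a < m) :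
    ∃ r < m, ∀ j : ℕ, ((d*j) % m = a ↔ j % m = r) := by
  haveI : NeZero m := ⟨hm.ne'⟩
  have hu : IsUnit (d : ZMod m) := (ZMod.isUnit_iff_coprime d m).mpr hdm
  set z : ZMod m := (d : ZMod m)⁻¹ * (a : ℕ) with hz
  refine ⟨z.val, ZMod.val_lt _, fun j => ?_⟩
  have h1 : (d*j) % m = a ↔ ((d : ZMod m) * (j : ZMod m)) = (a : ZMod m) := by
    rw [show ((d : ZMod m) * (j : ZMod m)) = ((d*j : ℕ) : ZMod m) by push_cast; ring,
      ZMod.natCast_eq_natCast_iff]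
    unfold Nat.ModEq
    rw [Nat.mod_eq_of_lt ha]
  have h2 : j % m = z.val ↔ (j : ZMod m) = z := by
    constructor
    · intro h
      have : ((j % m : ℕ) : ZMod m) = ((z.val : ℕ) : ZMod m) := by rw [h]
      rwa [ZMod.natCast_mod, ZMod.natCast_val, ZMod.cast_id] at this
    · intro h
      rw [← ZMod.val_natCast, h]
  rw [h1, h2]
  constructor
  · intro h
    rw [hz, ← h, ← mul_assoc, ZMod.inv_mul_of_unit _ hu, one_mul]
  · intro h
    rw [h, hz, ← mul_assoc, ZMod.mul_inv_of_unit _ hu, one_mul]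

private lemma card_squarefree_divisors' (n : ℕ) (hn : n ≠ 0) :
    (n.divisors.filter Squarefree).card = 2 ^ n.primeFactors.card := by
  have h := Nat.sum_divisors_filter_squarefree hn (f := fun _ => (1:ℕ))
  simp only [Finset.sum_const, smul_eq_mul, mul_one] at h
  rw [h, Finset.card_powerset, Nat.factors_eq]
  congr 1

private lemma sum_moebius_eq' (g : ℕ) :
    ∑ d ∈ g.divisors, ArithmeticFunction.moebius d = if g = 1 then 1 else 0 := by
  rw [← coe_mul_zeta_apply, moebius_mul_coe_zeta, one_apply]

theorem coprime_equidistribution (m n : ℕ) (hm : 0 < m) (hn : 0 < n)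
    (hmn : Nat.Coprime m n) (a : ℕ) (ha : a ≤ m - 1) :
    abs ((((Finset.Icc 1 n).filter (fun k => Nat.gcd k n = 1 ∧ k % m = a)).card : ℚ)
        - (Nat.totient n : ℚ) / (m : ℚ))
      < 2 ^ (n.primeFactors.card) := by
  classical
  have hn0 : n ≠ 0 := hn.ne'
  have ha' : a < m := by omega
  set T : Finset ℕ := (Finset.Icc 1 n).filter (fun k => k % m = a) with hT
  set c : ℕ → ℕ := fun d => ((Finset.Icc 1 n).filter (fun k => k % m = a ∧ d ∣ k)).card with hc
  -- Step A : Möbius expansion of the count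
  have stepA : ((((Finset.Icc 1 n).filter (fun k => Nat.gcd k n = 1 ∧ k % m = a)).card : ℤ))
      = ∑ d ∈ n.divisors, moebius d * (c d : ℤ) := by
    have hfilter : (Finset.Icc 1 n).filter (fun k => Nat.gcd k n = 1 ∧ k % m = a)
        = T.filter (fun k => Nat.gcd k n = 1) := by
      rw [hT, Finset.filter_filter]
      apply Finset.filter_congr
      intro x _
      constructor <;> exact fun h => ⟨h.2, h.1⟩
    rw [hfilter, Finset.card_filter]
    push_cast
    have h1 : ∀ k ∈ T, (if Nat.gcd k n = 1 then (1:ℤ) else 0)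
        = ∑ d ∈ n.divisors, if d ∣ k then moebius d else 0 := by
      intro k hk
      rw [← sum_moebius_eq' (Nat.gcd k n), ← Finset.sum_filter]
      congr 1
      ext d
      simp only [Nat.mem_divisors, Finset.mem_filter, Nat.dvd_gcd_iff]
      constructor
      · rintro ⟨⟨h1, h2⟩, -⟩
        exact ⟨⟨h2, hn0⟩, h1⟩
      · rintro ⟨⟨h2, -⟩, h1⟩
        refine ⟨⟨h1, h2⟩, ?_⟩
        simp [Nat.gcd_eq_zero_iff, hn0]
    rw [Finset.sum_congr rfl h1, Finset.sum_comm]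
    apply Finset.sum_congr rfl
    intro d _
    rw [← Finset.sum_filter, Finset.sum_const, hc]
    simp only [hT, Finset.filter_filter]
    rw [mul_comm]
    simp [mul_comm]
  -- Step B : Möbius expansion of totient
  have stepB : (Nat.totient n : ℚ) = ∑ d ∈ n.divisors, (moebius d : ℚ) * ((n / d : ℕ) : ℚ) := by
    have key := (sum_eq_iff_sum_mul_moebius_eq (R := ℚ)
        (f := fun i => (Nat.totient i : ℚ)) (g := fun i => (i : ℚ))).mp ?_ n hn
    · rw [← key, ← Nat.sum_divisorsAntidiagonal (fun d e => (moebius d : ℚ) * (e : ℚ))]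
    · intro N hN
      exact_mod_cast congrArg (fun z : ℕ => (z : ℚ)) (Nat.sum_totient N)
  -- rearrange
  have key : (((Finset.Icc 1 n).filter (fun k => Nat.gcd k n = 1 ∧ k % m = a)).card : ℚ)
      - (Nat.totient n : ℚ) / m
      = ∑ d ∈ n.divisors, (moebius d : ℚ) * ((c d : ℚ) - ((n / d : ℕ) : ℚ) / m) := by
    have stepA' : ((((Finset.Icc 1 n).filter
        (fun k => Nat.gcd k n = 1 ∧ k % m = a)).card : ℚ))
        = ∑ d ∈ n.divisors, (moebius d : ℚ) * (c d : ℚ) := by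
      exact_mod_cast congrArg (fun z : ℤ => (z : ℚ)) stepA
    rw [stepA', stepB, Finset.sum_div, ← Finset.sum_sub_distrib]
    apply Finset.sum_congr rfl
    intro d _
    ring
  rw [key]
  -- error bound for each divisor
  have he : ∀ d ∈ n.divisors, |(c d : ℚ) - ((n / d : ℕ) : ℚ) / m| < 1 := by
    intro d hd
    obtain ⟨hdn, -⟩ := Nat.mem_divisors.mp hd
    have hd0 : 0 < d := Nat.pos_of_mem_divisors hd
    have hdm : Nat.Coprime d m := (hmn.coprime_dvd_right hdn).symm
    obtain ⟨r, hr, hiff⟩ := residue_shift' m d a hm hdm ha'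
    have h2 : (Finset.Icc 1 (n/d)).filter (fun j => (d*j) % m = a)
        = (Finset.Icc 1 (n/d)).filter (fun j => j % m = r) := by
      apply Finset.filter_congr
      intro j _
      simpa using hiff j
    have := countIcc' (n/d) m r hm hr
    rw [hc]
    simp only []
    rw [card_dvd_mod' n m d a hd0, h2]
    exact this
  -- final estimate
  have habs : ∀ d : ℕ, |(moebius d : ℚ)| = if Squarefree d then 1 else 0 := by
    intro d
    by_cases hsq : Squarefree d
    · rw [if_pos hsq, moebius_apply_of_squarefree hsq]
      push_cast
      rw [abs_pow, abs_neg, abs_one, one_pow]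
    · rw [if_neg hsq, moebius_eq_zero_of_not_squarefree hsq]
      simp
  calc |∑ d ∈ n.divisors, (moebius d : ℚ) * ((c d : ℚ) - ((n / d : ℕ) : ℚ) / m)|
      ≤ ∑ d ∈ n.divisors, |(moebius d : ℚ) * ((c d : ℚ) - ((n / d : ℕ) : ℚ) / m)| :=
        Finset.abs_sum_le_sum_abs _ _
    _ < ∑ d ∈ n.divisors, |(moebius d : ℚ)| := by
        apply Finset.sum_lt_sum
        · intro i hi
          rw [abs_mul]
          exact mul_le_of_le_one_right (abs_nonneg _) (he i hi).le
        · refine ⟨1, Nat.one_mem_divisors.mpr hn0, ?_⟩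
          rw [abs_mul]
          have h1 : moebius 1 = 1 := moebius_apply_one
          rw [h1]
          simpa using he 1 (Nat.one_mem_divisors.mpr hn0)
    _ = ∑ d ∈ n.divisors, (if Squarefree d then (1:ℚ) else 0) := by
        apply Finset.sum_congr rfl
        intro d _
        exact habs d
    _ = ((n.divisors.filter Squarefree).card : ℚ) := by
        simp [Finset.sum_boole]
    _ = 2 ^ n.primeFactors.card := by
        rw [card_squarefree_divisors' n hn0]
        push_cast
        ring
end

section
/- Let n be an odd positive integer divisible by 3, and let a be an integer with 0 ≤ a ≤ 11 and gcd(a,3) = 1. Then the number N_a of integers k with 1 ≤ k ≤ n, gcd(k,n) = 1, and k ≡ a (mod 12) satisfies |N_a − φ(n)/8| < 2^{ω(n)−1}. -/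
/-!
Write `n = 3 ^ e * r` with `3 ∤ r`. Since `a` is prime to 3, so is every `k ≡ a (mod 12)`, and
`N_a` counts the `k ≤ n` in the class of `a` modulo 12 that are prime to `r`. Möbius inversion
over the divisors `d ∣ r` writes this as `∑ μ(d) B(d)`, where `B(d)` counts the `k ≤ n` with
`d ∣ k` and `k ≡ a (mod 12)`. As `gcd(12, d) = 1` this is a single residue class modulo `12 d`,
so `B(d)` differs from `n / (12 d)` by less than 1. The main terms add up to
`n φ(r) / (12 r) = φ(n) / 8`, and the errors are weighted by `|μ(d)|`, whose sum over `d ∣ r` is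
`2 ^ ω(r) = 2 ^ (ω(n) - 1)`.
-/

open Finset ArithmeticFunction
open scoped ArithmeticFunction.Moebius

theorem Nat.sum_divisors_moebius (m : ℕ) :
    ∑ d ∈ m.divisors, μ d = if m = 1 then 1 else 0 := by
  simpa only [coe_mul_zeta_apply, one_apply] using
    congrArg (fun f : ArithmeticFunction ℤ => f m) moebius_mul_coe_zeta

theorem Nat.divisors_gcd_eq_filter {k r : ℕ} (hr : r ≠ 0) :
    (k.gcd r).divisors = {d ∈ r.divisors | d ∣ k} := by
  ext d
  simp only [mem_divisors, dvd_gcd_iff, ne_eq, gcd_eq_zero_iff, hr, and_false,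
    not_false_eq_true, and_true, mem_filter]
  tauto

theorem Nat.card_filter_coprime_eq_sum_moebius (s : Finset ℕ) {r : ℕ} (hr : r ≠ 0) :
    (#{k ∈ s | k.Coprime r} : ℤ) = ∑ d ∈ r.divisors, μ d * #{k ∈ s | d ∣ k} := by
  have hindicator : ∀ k, (if k.Coprime r then 1 else 0 : ℤ)
      = ∑ d ∈ r.divisors, if d ∣ k then μ d else 0 := by
    intro k
    rw [← sum_filter, ← Nat.divisors_gcd_eq_filter hr, Nat.sum_divisors_moebius]
  simp only [card_filter, Nat.cast_sum, Nat.cast_ite, Nat.cast_one, Nat.cast_zero, hindicator]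
  rw [sum_comm]
  refine sum_congr rfl fun d _ => ?_
  rw [mul_sum]
  refine sum_congr rfl fun k _ => ?_
  split_ifs <;> simp

theorem Nat.sum_divisors_moebius_div (r : ℕ) :
    ∑ d ∈ r.divisors, (μ d : ℚ) / d = Nat.totient r / r := by
  rcases eq_or_ne r 0 with rfl | hr
  · simp
  have hinv := (sum_eq_iff_sum_mul_moebius_eq (R := ℚ) (f := fun n => (Nat.totient n : ℚ))
    (g := fun n => (n : ℚ))).mp (fun n _ => by exact_mod_cast Nat.sum_totient n) r
    (Nat.pos_of_ne_zero hr)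
  rw [Nat.sum_divisorsAntidiagonal (fun i j => (μ i : ℚ) * (j : ℕ))] at hinv
  rw [← hinv, sum_div]
  refine sum_congr rfl fun d hd => ?_
  rw [Nat.cast_div (Nat.dvd_of_mem_divisors hd) (by simpa using (Nat.pos_of_mem_divisors hd).ne')]
  field_simp

theorem Nat.sum_divisors_abs_moebius {r : ℕ} (hr : r ≠ 0) :
    ∑ d ∈ r.divisors, |μ d| = 2 ^ #r.primeFactors := by
  simp only [abs_moebius, ← sum_filter, Nat.sum_divisors_filter_squarefree hr, sum_const,
    card_powerset, Nat.factors_eq, nsmul_eq_mul, mul_one]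
  rfl

theorem Nat.exists_modEq_mul_iff_modEq_and_dvd {q d : ℕ} (h : q.Coprime d) (a : ℕ) :
    ∃ c, ∀ k, k ≡ a [MOD q] ∧ d ∣ k ↔ k ≡ c [MOD q * d] := by
  obtain ⟨c, hca, hc0⟩ := Nat.chineseRemainder h a 0
  refine ⟨c, fun k => ?_⟩
  rw [← Nat.modEq_and_modEq_iff_modEq_mul h, ← Nat.modEq_zero_iff_dvd]
  exact and_congr ⟨fun hk => hk.trans hca.symm, fun hk => hk.trans hca⟩
    ⟨fun hk => hk.trans hc0.symm, fun hk => hk.trans hc0⟩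

theorem Nat.abs_card_Ioc_filter_modEq_sub_div_lt (n v : ℕ) {m : ℕ} (hm : 0 < m) :
    |(#{k ∈ Ioc 0 n | k ≡ v [MOD m]} : ℚ) - n / m| < 1 := by
  have hcard := Nat.Ioc_filter_modEq_card 0 n hm v
  rw [Nat.cast_zero] at hcard
  set x : ℚ := (n - v) / m
  set y : ℚ := (0 - v) / m
  have hxy : x - y = n / m := by simp only [x, y]; ring
  have hmono : ⌊y⌋ ≤ ⌊x⌋ := Int.floor_mono (by simp only [x, y]; gcongr; simp)
  rw [max_eq_left (by omega)] at hcard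
  have hcardQ : (#{k ∈ Ioc 0 n | k ≡ v [MOD m]} : ℚ) = ⌊x⌋ - ⌊y⌋ := by exact_mod_cast hcard
  rw [hcardQ, ← hxy, abs_lt]
  constructor <;>
    linarith [Int.floor_le x, Int.floor_le y, Int.lt_floor_add_one x, Int.lt_floor_add_one y]

theorem Nat.abs_card_coprime_modEq_sub_lt (n a : ℕ) {q r : ℕ} (hq : 0 < q) (hr : r ≠ 0)
    (hqr : q.Coprime r) :
    |(#{k ∈ Ioc 0 n | k.Coprime r ∧ k ≡ a [MOD q]} : ℚ) - n * Nat.totient r / (q * r)|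
      < 2 ^ #r.primeFactors := by
  set s := {k ∈ Ioc 0 n | k ≡ a [MOD q]}
  set B : ℕ → ℚ := fun d => #{k ∈ s | d ∣ k}
  have hsieve : (#{k ∈ Ioc 0 n | k.Coprime r ∧ k ≡ a [MOD q]} : ℚ)
      = ∑ d ∈ r.divisors, (μ d : ℚ) * B d := by
    rw [filter_congr fun k _ => and_comm, ← filter_filter]
    simp only [B]
    exact_mod_cast Nat.card_filter_coprime_eq_sum_moebius s hr
  have hmain : (n * Nat.totient r / (q * r) : ℚ)
      = ∑ d ∈ r.divisors, (μ d : ℚ) * (n / (q * d)) := by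
    rw [mul_div_mul_comm, ← Nat.sum_divisors_moebius_div, mul_sum]
    refine sum_congr rfl fun d _ => ?_
    ring
  have herr : ∀ d ∈ r.divisors, |B d - n / (q * d)| < 1 := by
    intro d hd
    obtain ⟨c, hc⟩ := Nat.exists_modEq_mul_iff_modEq_and_dvd
      (hqr.coprime_dvd_right (Nat.dvd_of_mem_divisors hd)) a
    have hB : B d = #{k ∈ Ioc 0 n | k ≡ c [MOD q * d]} := by
      simp only [B, s, filter_filter, hc]
    rw [hB]
    exact_mod_cast Nat.abs_card_Ioc_filter_modEq_sub_div_lt n c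
      (Nat.mul_pos hq (Nat.pos_of_mem_divisors hd))
  have hone : 1 ∈ r.divisors := Nat.one_mem_divisors.mpr hr
  rw [hsieve, hmain, ← sum_sub_distrib]
  calc |∑ d ∈ r.divisors, (μ d * B d - μ d * (n / (q * d)))|
      ≤ ∑ d ∈ r.divisors, |(μ d : ℚ)| * |B d - n / (q * d)| := by
        refine (abs_sum_le_sum_abs _ _).trans_eq (sum_congr rfl fun d _ => ?_)
        rw [← mul_sub, abs_mul]
    _ < ∑ d ∈ r.divisors, |(μ d : ℚ)| := by
        refine sum_lt_sum (fun d hd => mul_le_of_le_one_right (abs_nonneg _) (herr d hd).le)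
          ⟨1, hone, ?_⟩
        simpa using herr 1 hone
    _ = 2 ^ #r.primeFactors := by
        exact_mod_cast Nat.sum_divisors_abs_moebius hr

theorem Nat.primeFactors_prime_pow_mul {p e r : ℕ} (hp : p.Prime) (he : e ≠ 0) (hpr : ¬p ∣ r) :
    (p ^ e * r).primeFactors = insert p r.primeFactors := by
  rw [((hp.coprime_iff_not_dvd.mpr hpr).pow_left e).primeFactors_mul,
    Nat.primeFactors_prime_pow he hp, insert_eq]

theorem Nat.ModEq.coprime_prime_pow_mul_iff {p q a k e r : ℕ} (hk : k ≡ a [MOD q])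
    (hp : p.Prime) (hpq : p ∣ q) (hpa : ¬p ∣ a) (he : e ≠ 0) :
    k.Coprime (p ^ e * r) ↔ k.Coprime r := by
  have hkp : k.Coprime p :=
    Nat.coprime_comm.mp (hp.coprime_iff_not_dvd.mpr fun h => hpa ((hk.dvd_iff hpq).mp h))
  rw [Nat.coprime_mul_iff_right, Nat.coprime_pow_right_iff (Nat.pos_of_ne_zero he)]
  exact and_iff_right hkp

theorem coprime_equidistribution_mod_twelve_general (n : ℕ) (hodd : Odd n)
    (h3 : 3 ∣ n) (a : ℕ) (ha : a ≤ 11) (ha3 : Nat.gcd a 3 = 1) :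
    abs ((((Finset.Icc 1 n).filter (fun k => Nat.gcd k n = 1 ∧ k % 12 = a)).card : ℚ)
        - (Nat.totient n : ℚ) / 8)
      < 2 ^ (n.primeFactors.card - 1) := by
  obtain ⟨e, r, h3r, rfl⟩ := Nat.exists_eq_pow_mul_and_not_dvd hodd.pos.ne' 3 (by norm_num)
  obtain ⟨e, rfl⟩ : ∃ f, e = f + 1 :=
    Nat.exists_eq_succ_of_ne_zero fun he => h3r (by simpa [he] using h3)
  have hr0 : r ≠ 0 := by rintro rfl; simp at h3r
  have h3a : ¬3 ∣ a := fun h => by simpa [ha3] using Nat.dvd_gcd h (dvd_refl 3)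
  have hcop : Nat.Coprime 12 r :=
    Nat.Coprime.mul_left (Nat.Coprime.pow_left 2 (Nat.coprime_two_left.mpr
      (hodd.of_dvd_nat (dvd_mul_left r _)))) (Nat.prime_three.coprime_iff_not_dvd.mpr h3r)
  have hcount : (Icc 1 (3 ^ (e + 1) * r)).filter
        (fun k => Nat.gcd k (3 ^ (e + 1) * r) = 1 ∧ k % 12 = a)
      = {k ∈ Ioc 0 (3 ^ (e + 1) * r) | k.Coprime r ∧ k ≡ a [MOD 12]} := by
    refine filter_congr fun k _ => ?_
    rw [← Nat.coprime_iff_gcd_eq_one, show k % 12 = a ↔ k ≡ a [MOD 12] by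
      rw [Nat.ModEq, Nat.mod_eq_of_lt (show a < 12 by omega)]]
    exact and_congr_left fun hk => hk.coprime_prime_pow_mul_iff Nat.prime_three
      (by norm_num) h3a e.succ_ne_zero
  have htotient : (Nat.totient (3 ^ (e + 1) * r) : ℚ) / 8
      = (3 ^ (e + 1) * r : ℕ) * Nat.totient r / (12 * r) := by
    rw [Nat.totient_mul ((Nat.prime_three.coprime_iff_not_dvd.mpr h3r).pow_left _),
      Nat.totient_prime_pow_succ Nat.prime_three]
    push_cast
    field_simp
    ring
  have hω : #(3 ^ (e + 1) * r).primeFactors - 1 = #r.primeFactors := by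
    rw [Nat.primeFactors_prime_pow_mul Nat.prime_three e.succ_ne_zero h3r,
      card_insert_of_notMem fun h => h3r (Nat.dvd_of_mem_primeFactors h), Nat.add_sub_cancel]
  rw [hcount, htotient, hω]
  exact Nat.abs_card_coprime_modEq_sub_lt _ a (by norm_num) hr0 hcop

theorem coprime_equidistribution_mod_twelve (n : ℕ) (hn : 0 < n) (hodd : Odd n)
    (h3 : 3 ∣ n) (a : ℕ) (ha : a ≤ 11) (ha3 : Nat.gcd a 3 = 1) :
    abs ((((Finset.Icc 1 n).filter (fun k => Nat.gcd k n = 1 ∧ k % 12 = a)).card : ℚ)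
        - (Nat.totient n : ℚ) / 8)
      < 2 ^ (n.primeFactors.card - 1) :=
  coprime_equidistribution_mod_twelve_general n hodd h3 a ha ha3
end

section
/- Let n be an odd positive integer with n ∉ {1,3,9,15,21,33,45,75,105,165,195}. Then φ(n) ≥ n^{6/7}, i.e. φ(n)^7 ≥ n^6. -/
/-!
Put `ρ(n) = φ(n)^7 / n^6`, so that the claim is `ρ(n) ≥ 1`. The ratio `ρ` is multiplicative,
`ρ(p^(a+1)) = p^a ρ(p)`, and `ρ(p) = (p-1)^7 / p^6` increases with `p`; since
`ρ(5) = 4^7 / 5^6 > 1`, multiplying by a number whose prime factors are all at least `5` never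
decreases `ρ`. Write an odd `n` as `3^v k` with such a `k`. For `v = 0` and `v ≥ 3` both factors
are at least `1`. For `v = 1` (resp. `v = 2`) it suffices that `k` has a divisor `d` with
`ρ(d) ≥ 1 / ρ(3^v)`: a prime `p ≥ 13` or one of `125, 49, 121, 77, 175, 275` (resp. a prime
`p ≥ 7` or `25`). A `k` with no such divisor divides `1925` (resp. `5`), and is then excluded.
-/

lemma sub_one_pow_succ_div_pow_le_of_le {K : Type*} [Field K] [LinearOrder K]
    [IsStrictOrderedRing K] {x y : K} (hx : 1 ≤ x) (hxy : x ≤ y) (n : ℕ) :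
    (x - 1) ^ (n + 1) / x ^ n ≤ (y - 1) ^ (n + 1) / y ^ n := by
  simp only [pow_succ', mul_div_assoc, ← div_pow]
  have hx0 : 0 < x := by linarith
  have hfrac : (x - 1) / x ≤ (y - 1) / y := by
    rw [div_le_div_iff₀ hx0 (by linarith)]
    nlinarith
  have : 0 ≤ (x - 1) / x := div_nonneg (by linarith) hx0.le
  gcongr
  linarith

lemma dvd_of_forall_prime_dvd_exists_pow {k N : ℕ} (hN : N ≠ 0)
    (h : ∀ p, p.Prime → p ∣ k → ∃ i, p ^ i ∣ N ∧ ¬p ^ (i + 1) ∣ k) : k ∣ N := by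
  have hk : k ≠ 0 := by
    rintro rfl
    obtain ⟨i, -, hi⟩ := h 2 Nat.prime_two (dvd_zero 2)
    exact hi (dvd_zero _)
  refine (Nat.factorization_prime_le_iff_dvd hk hN).1 fun p hp => ?_
  by_cases hpk : p ∣ k
  · obtain ⟨i, hiN, hik⟩ := h p hp hpk
    rw [hp.pow_dvd_iff_le_factorization hk, not_le] at hik
    exact (Nat.lt_succ_iff.1 hik).trans ((hp.pow_dvd_iff_le_factorization hN).1 hiN)
  · simp [Nat.factorization_eq_zero_of_not_dvd hpk]

def totientRatio (n : ℕ) : ℚ := (n.totient : ℚ) ^ 7 / (n : ℚ) ^ 6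

lemma totientRatio_nonneg (n : ℕ) : 0 ≤ totientRatio n := by
  unfold totientRatio
  positivity

lemma totientRatio_pos {n : ℕ} (hn : n ≠ 0) : 0 < totientRatio n := by
  have : 0 < n.totient := Nat.totient_pos.2 (Nat.pos_of_ne_zero hn)
  unfold totientRatio
  positivity

@[simp]
lemma totientRatio_one : totientRatio 1 = 1 := by
  simp [totientRatio]

lemma one_le_totientRatio_iff {n : ℕ} (hn : n ≠ 0) :
    1 ≤ totientRatio n ↔ n ^ 6 ≤ n.totient ^ 7 := by
  rw [totientRatio, one_le_div (by positivity)]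
  exact_mod_cast Iff.rfl

lemma totientRatio_mul {m n : ℕ} (h : m.Coprime n) :
    totientRatio (m * n) = totientRatio m * totientRatio n := by
  simp only [totientRatio, Nat.totient_mul h, Nat.cast_mul, mul_pow, mul_div_mul_comm]

lemma totientRatio_prime_pow_succ {p : ℕ} (hp : p.Prime) (a : ℕ) :
    totientRatio (p ^ (a + 1)) = (p : ℚ) ^ a * (((p : ℚ) - 1) ^ 7 / (p : ℚ) ^ 6) := by
  have hp0 : (p : ℚ) ≠ 0 := by exact_mod_cast hp.ne_zero
  rw [totientRatio, Nat.totient_prime_pow_succ hp, Nat.cast_mul, Nat.cast_sub hp.one_le]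
  push_cast
  field_simp
  ring

lemma totientRatio_prime {p : ℕ} (hp : p.Prime) :
    totientRatio p = ((p : ℚ) - 1) ^ 7 / (p : ℚ) ^ 6 := by
  simpa using totientRatio_prime_pow_succ hp 0

lemma totientRatio_prime_le {p q : ℕ} (hq : q.Prime) (hp : p.Prime) (hqp : q ≤ p) :
    totientRatio q ≤ totientRatio p := by
  rw [totientRatio_prime hq, totientRatio_prime hp]
  exact sub_one_pow_succ_div_pow_le_of_le (by exact_mod_cast hq.one_le) (by exact_mod_cast hqp) 6

lemma one_le_totientRatio_prime {p : ℕ} (hp : p.Prime) (h5 : 5 ≤ p) : 1 ≤ totientRatio p := by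
  refine le_trans ?_ (totientRatio_prime_le Nat.prime_five hp h5)
  rw [totientRatio_prime Nat.prime_five]
  norm_num

lemma totientRatio_mul_prime_of_dvd {m p : ℕ} (hp : p.Prime) (hpm : p ∣ m) :
    totientRatio (m * p) = p * totientRatio m := by
  have hp0 : (p : ℚ) ≠ 0 := by exact_mod_cast hp.ne_zero
  rw [totientRatio, mul_comm m, Nat.totient_mul_of_prime_of_dvd hp hpm, totientRatio]
  push_cast
  rw [mul_pow, mul_pow, mul_div_mul_comm, pow_succ, mul_div_cancel_left₀ _ (pow_ne_zero 6 hp0)]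

lemma totientRatio_le_mul_prime (m : ℕ) {p : ℕ} (hp : p.Prime) (h5 : 5 ≤ p) :
    totientRatio m ≤ totientRatio (m * p) := by
  by_cases hpm : p ∣ m
  · rw [totientRatio_mul_prime_of_dvd hp hpm]
    exact le_mul_of_one_le_left (totientRatio_nonneg m) (by exact_mod_cast hp.one_le)
  · rw [totientRatio_mul ((hp.coprime_iff_not_dvd.2 hpm).symm)]
    exact le_mul_of_one_le_right (totientRatio_nonneg m) (one_le_totientRatio_prime hp h5)

lemma totientRatio_le_mul (m : ℕ) {e : ℕ} (he : ∀ p, p.Prime → p ∣ e → 5 ≤ p) :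
    totientRatio m ≤ totientRatio (m * e) := by
  induction e using induction_on_primes generalizing m with
  | zero => exact absurd (he 2 Nat.prime_two (dvd_zero 2)) (by norm_num)
  | one => simp
  | prime_mul p a hp ih =>
    calc totientRatio m ≤ totientRatio (m * p) :=
          totientRatio_le_mul_prime m hp (he p hp (dvd_mul_right p a))
      _ ≤ totientRatio (m * p * a) := ih _ fun q hq hqa => he q hq (dvd_mul_of_dvd_right hqa p)
      _ = totientRatio (m * (p * a)) := by rw [mul_assoc]

lemma totientRatio_le_of_dvd {d k : ℕ} (hk : ∀ p, p.Prime → p ∣ k → 5 ≤ p) (hdk : d ∣ k) :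
    totientRatio d ≤ totientRatio k := by
  obtain ⟨e, rfl⟩ := hdk
  exact totientRatio_le_mul d fun p hp hpe => hk p hp (dvd_mul_of_dvd_right hpe d)

lemma one_le_totientRatio {k : ℕ} (hk : ∀ p, p.Prime → p ∣ k → 5 ≤ p) : 1 ≤ totientRatio k := by
  simpa using totientRatio_le_of_dvd hk (one_dvd k)

lemma inv_totientRatio_nine_le {k : ℕ} (hk : ∀ p, p.Prime → p ∣ k → 5 ≤ p)
    (hS : k ∉ ({1, 5} : Finset ℕ)) : (totientRatio 9)⁻¹ ≤ totientRatio k := by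
  suffices ∃ d, d ∣ k ∧ 243 / 128 ≤ totientRatio d by
    obtain ⟨d, hdk, hd⟩ := this
    refine le_trans ?_ (hd.trans (totientRatio_le_of_dvd hk hdk))
    rw [show 9 = 3 ^ (1 + 1) from rfl, totientRatio_prime_pow_succ Nat.prime_three]
    norm_num
  by_cases hbig : ∃ p, p.Prime ∧ 7 ≤ p ∧ p ∣ k
  · obtain ⟨p, hp, h7, hpk⟩ := hbig
    refine ⟨p, hpk, le_trans ?_ (totientRatio_prime_le (by norm_num) hp h7)⟩
    rw [totientRatio_prime (by norm_num)]
    norm_num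
  by_cases h25 : 5 ^ 2 ∣ k
  · exact ⟨_, h25, by rw [totientRatio_prime_pow_succ (by norm_num)]; norm_num⟩
  have h5 : k ∣ 5 := dvd_of_forall_prime_dvd_exists_pow (by norm_num) fun p hp hpk => by
    have : p < 7 := not_le.1 fun h7 => hbig ⟨p, hp, h7, hpk⟩
    have := hk p hp hpk
    interval_cases p <;> norm_num at hp
    exact ⟨1, dvd_rfl, h25⟩
  exfalso
  apply hS
  simpa only [Nat.divisors_ofNat] using Nat.mem_divisors.2 ⟨h5, by norm_num⟩

lemma inv_totientRatio_three_le {k : ℕ} (hk : ∀ p, p.Prime → p ∣ k → 5 ≤ p)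
    (hS : k ∉ ({1, 5, 7, 11, 25, 35, 55} : Finset ℕ)) : (totientRatio 3)⁻¹ ≤ totientRatio k := by
  suffices ∃ d, d ∣ k ∧ 729 / 128 ≤ totientRatio d by
    obtain ⟨d, hdk, hd⟩ := this
    refine le_trans ?_ (hd.trans (totientRatio_le_of_dvd hk hdk))
    rw [totientRatio_prime Nat.prime_three]
    norm_num
  by_cases hbig : ∃ p, p.Prime ∧ 13 ≤ p ∧ p ∣ k
  · obtain ⟨p, hp, h13, hpk⟩ := hbig
    refine ⟨p, hpk, le_trans ?_ (totientRatio_prime_le (by norm_num) hp h13)⟩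
    rw [totientRatio_prime (by norm_num)]
    norm_num
  by_cases h125 : 5 ^ 3 ∣ k
  · exact ⟨_, h125, by rw [totientRatio_prime_pow_succ (by norm_num)]; norm_num⟩
  by_cases h49 : 7 ^ 2 ∣ k
  · exact ⟨_, h49, by rw [totientRatio_prime_pow_succ (by norm_num)]; norm_num⟩
  by_cases h121 : 11 ^ 2 ∣ k
  · exact ⟨_, h121, by rw [totientRatio_prime_pow_succ (by norm_num)]; norm_num⟩
  by_cases h77 : 7 * 11 ∣ k
  · refine ⟨_, h77, ?_⟩
    rw [totientRatio_mul (by norm_num), totientRatio_prime (by norm_num),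
      totientRatio_prime (by norm_num)]
    norm_num
  by_cases h175 : 5 ^ 2 * 7 ∣ k
  · refine ⟨_, h175, ?_⟩
    rw [totientRatio_mul (by norm_num), totientRatio_prime_pow_succ (by norm_num),
      totientRatio_prime (by norm_num)]
    norm_num
  by_cases h275 : 5 ^ 2 * 11 ∣ k
  · refine ⟨_, h275, ?_⟩
    rw [totientRatio_mul (by norm_num), totientRatio_prime_pow_succ (by norm_num),
      totientRatio_prime (by norm_num)]
    norm_num
  have h1925 : k ∣ 1925 := dvd_of_forall_prime_dvd_exists_pow (by norm_num) fun p hp hpk => by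
    have : p < 13 := not_le.1 fun h13 => hbig ⟨p, hp, h13, hpk⟩
    have := hk p hp hpk
    interval_cases p <;> norm_num at hp
    · exact ⟨2, by norm_num, h125⟩
    · exact ⟨1, by norm_num, h49⟩
    · exact ⟨1, by norm_num, h121⟩
  exfalso
  apply hS
  have hk1925 := Nat.mem_divisors.2 ⟨h1925, (by norm_num : 1925 ≠ 0)⟩
  simp only [Nat.divisors_ofNat, Finset.mem_insert, Finset.mem_singleton] at hk1925 ⊢
  omega

lemma one_le_totientRatio_three_pow {v : ℕ} (hv : 3 ≤ v) : 1 ≤ totientRatio (3 ^ v) := by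
  obtain ⟨a, rfl⟩ := Nat.exists_eq_add_of_le' hv
  rw [totientRatio_prime_pow_succ Nat.prime_three, pow_add]
  have : (1 : ℚ) ≤ 3 ^ a := one_le_pow₀ (by norm_num)
  norm_num
  linarith

lemma exists_eq_three_pow_mul_of_odd {n : ℕ} (hn : Odd n) :
    ∃ v k, (∀ p, p.Prime → p ∣ k → 5 ≤ p) ∧ n = 3 ^ v * k := by
  refine ⟨n.factorization 3, n / 3 ^ n.factorization 3, fun p hp hpk => ?_,
    (Nat.ordProj_mul_ordCompl_eq_self n 3).symm⟩
  refine hp.five_le_of_ne_two_of_ne_three ?_ ?_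
  · rintro rfl
    exact hn.not_two_dvd_nat (hpk.trans (Nat.ordCompl_dvd n 3))
  · rintro rfl
    exact Nat.not_dvd_ordCompl Nat.prime_three hn.pos.ne' hpk

theorem totient_pow_seven_ge_general (n : ℕ) (hodd : Odd n)
    (hn' : n ∉ ({1, 3, 9, 15, 21, 33, 45, 75, 105, 165, 195} : Finset ℕ)) :
    (Nat.totient n) ^ 7 ≥ n ^ 6 := by
  rw [ge_iff_le, ← one_le_totientRatio_iff hodd.pos.ne']
  obtain ⟨v, k, hk, rfl⟩ := exists_eq_three_pow_mul_of_odd hodd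
  have h3k : Nat.Coprime 3 k :=
    Nat.prime_three.coprime_iff_not_dvd.2 fun h => absurd (hk 3 Nat.prime_three h) (by norm_num)
  rw [totientRatio_mul (h3k.pow_left v)]
  obtain rfl | rfl | rfl | hv : v = 0 ∨ v = 1 ∨ v = 2 ∨ 3 ≤ v := by omega
  · simpa using one_le_totientRatio hk
  · refine (inv_le_iff_one_le_mul₀' (totientRatio_pos (by norm_num))).1
      (inv_totientRatio_three_le hk fun h => hn' ?_)
    simp only [Finset.mem_insert, Finset.mem_singleton] at h ⊢
    omega
  · refine (inv_le_iff_one_le_mul₀' (totientRatio_pos (by norm_num))).1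
      (inv_totientRatio_nine_le hk fun h => hn' ?_)
    simp only [Finset.mem_insert, Finset.mem_singleton] at h ⊢
    omega
  · exact one_le_mul_of_one_le_of_one_le (one_le_totientRatio_three_pow hv) (one_le_totientRatio hk)

theorem totient_pow_seven_ge (n : ℕ) (hn : 0 < n) (hodd : Odd n)
    (hn' : n ∉ ({1, 3, 9, 15, 21, 33, 45, 75, 105, 165, 195} : Finset ℕ)) :
    (Nat.totient n) ^ 7 ≥ n ^ 6 :=
  totient_pow_seven_ge_general n hodd hn'
end

section
/- Let n be an odd positive integer. For j ∈ {1,3,5,7}, let A_j be the set of integers k with 1 ≤ k ≤ 4n, gcd(k,2n) = 1 and k ≡ j (mod 8), and let B_j be the set of integers k with 4n+1 ≤ k ≤ 8n, gcd(k,2n) = 1 and k ≡ j (mod 8). Then |A_1| = |A_3| = |B_5| = |B_7| and |A_5| = |A_7| = |B_1| = |B_3|, and moreover |A_j| + |B_j| = φ(n) for each j ∈ {1,3,5,7}. -/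
/-!
Since `n` is odd, `4n ≡ 4 (mod 8)` and `2n ∣ 4n`. Hence the reflection `k ↦ 4n - k` maps
`A_j` onto `A_{4-j}` and the translation `k ↦ k + 4n` maps `A_j` onto `B_{j+4}` (indices mod 8),
both preserving coprimality with `2n`. For odd `j`, `A_j ∪ B_j` is the set of `j + 8i` with
`0 ≤ i < n` and `gcd(j + 8i, n) = 1`; as `gcd(8, n) = 1`, `i ↦ j + 8i` permutes the residues
mod `n`, so this set has `φ(n)` elements.
-/

/-- The set `A_j` of integers `1 ≤ k ≤ 4n` with `gcd(k, 2n) = 1` and `k ≡ j (mod 8)`. -/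
def Aset (n j : ℕ) : Finset ℕ :=
  (Finset.Icc 1 (4 * n)).filter (fun k => Nat.gcd k (2 * n) = 1 ∧ k % 8 = j)

/-- The set `B_j` of integers `4n+1 ≤ k ≤ 8n` with `gcd(k, 2n) = 1` and `k ≡ j (mod 8)`. -/
def Bset (n j : ℕ) : Finset ℕ :=
  (Finset.Icc (4 * n + 1) (8 * n)).filter (fun k => Nat.gcd k (2 * n) = 1 ∧ k % 8 = j)

open Finset

theorem Nat.card_filter_coprime_add_mul {a n : ℕ} (b : ℕ) (ha : a.Coprime n) :
    #{i ∈ range n | (b + a * i).Coprime n} = n.totient := by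
  set f : ℕ → ℕ := fun i => (b + a * i) % n
  have hf_mapsTo : ∀ i ∈ range n, f i ∈ range n := fun i hi =>
    mem_range.2 (Nat.mod_lt _ (Nat.zero_lt_of_lt (mem_range.1 hi)))
  have hf_injOn : Set.InjOn f (range n) := fun i hi i' hi' h =>
    ((Nat.ModEq.add_left_cancel' b h).cancel_left_of_coprime (Nat.coprime_comm.1 ha)).eq_of_lt_of_lt
      (mem_range.1 hi) (mem_range.1 hi')
  have hf_image : (range n).image f = range n :=
    eq_of_subset_of_card_le (fun _ hx => by
      obtain ⟨i, hi, rfl⟩ := mem_image.1 hx; exact hf_mapsTo i hi)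
      (Finset.card_image_of_injOn hf_injOn).ge
  calc #{i ∈ range n | (b + a * i).Coprime n}
      = #{i ∈ range n | n.Coprime (f i)} := by
        congr 1
        exact filter_congr fun i _ => by
          rw [Nat.coprime_comm (n := n), ZMod.coprime_mod_iff_coprime]
    _ = #{x ∈ (range n).image f | n.Coprime x} := by
        rw [filter_image, Finset.card_image_of_injOn (hf_injOn.mono (filter_subset _ _))]
    _ = n.totient := by rw [hf_image, Nat.totient_eq_card_coprime]

theorem Nat.coprime_sub_iff_of_dvd {a k d : ℕ} (hd : d ∣ a) (hk : k ≤ a) :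
    (a - k).Coprime d ↔ k.Coprime d := by
  obtain ⟨t, rfl⟩ := hd
  rw [← Nat.isCoprime_iff_coprime, ← Nat.isCoprime_iff_coprime, Nat.cast_sub hk, Nat.cast_mul,
    sub_eq_neg_add, IsCoprime.add_mul_left_left_iff, IsCoprime.neg_left_iff]

theorem disjoint_Aset_Bset (n j : ℕ) : Disjoint (Aset n j) (Bset n j) :=
  disjoint_left.2 fun k hA hB => by
    simp only [Aset, Bset, mem_filter, mem_Icc] at hA hB
    omega

theorem four_mul_sub_mem_Aset {n j j' k : ℕ} (hn : Odd n) (hj' : j' < 8)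
    (hjj' : (j + j') % 8 = 4) (hk : k ∈ Aset n j) : 4 * n - k ∈ Aset n j' := by
  simp only [Aset, mem_filter, mem_Icc] at hk ⊢
  obtain ⟨⟨hk1, hk4n⟩, hcop, hkj⟩ := hk
  -- `k` is odd, so `k ≠ 4n` and `4n - k` stays positive.
  have hk_odd :=
    Nat.odd_iff.1 (Nat.coprime_two_right.1 (Nat.Coprime.coprime_mul_right_right hcop))
  have hn_odd := Nat.odd_iff.1 hn
  have h2n_dvd : 2 * n ∣ 4 * n := Dvd.intro 2 (by ring)
  exact ⟨⟨by omega, by omega⟩, (Nat.coprime_sub_iff_of_dvd h2n_dvd hk4n).2 hcop, by omega⟩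

theorem add_four_mul_mem_Bset {n j k : ℕ} (hn : Odd n) (hk : k ∈ Aset n j) :
    k + 4 * n ∈ Bset n ((j + 4) % 8) := by
  simp only [Aset, Bset, mem_filter, mem_Icc] at hk ⊢
  obtain ⟨⟨hk1, hk4n⟩, hcop, hkj⟩ := hk
  have hn_odd := Nat.odd_iff.1 hn
  refine ⟨⟨by omega, by omega⟩, ?_, by omega⟩
  rw [show k + 4 * n = k + 2 * n * 2 by ring]
  exact (Nat.coprime_add_mul_left_left k (2 * n) 2).2 hcop

theorem sub_four_mul_mem_Aset {n j k : ℕ} (hn : Odd n) (hj : j < 8)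
    (hk : k ∈ Bset n ((j + 4) % 8)) : k - 4 * n ∈ Aset n j := by
  simp only [Aset, Bset, mem_filter, mem_Icc] at hk ⊢
  obtain ⟨⟨hk4n, hk8n⟩, hcop, hkj⟩ := hk
  have hn_odd := Nat.odd_iff.1 hn
  refine ⟨⟨by omega, by omega⟩, ?_, by omega⟩
  rw [show k = k - 4 * n + 2 * n * 2 by omega] at hcop
  exact (Nat.coprime_add_mul_left_left _ (2 * n) 2).1 hcop

theorem card_Aset_eq_card_Aset {n j j' : ℕ} (hn : Odd n) (hj : j < 8) (hj' : j' < 8)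
    (hjj' : (j + j') % 8 = 4) : #(Aset n j) = #(Aset n j') :=
  card_nbij' (4 * n - ·) (4 * n - ·) (fun _ hk => four_mul_sub_mem_Aset hn hj' hjj' hk)
    (fun _ hk => four_mul_sub_mem_Aset hn hj (by omega) hk)
    (fun _ hk => Nat.sub_sub_self (mem_Icc.1 (mem_filter.1 hk).1).2)
    (fun _ hk => Nat.sub_sub_self (mem_Icc.1 (mem_filter.1 hk).1).2)

theorem card_Aset_eq_card_Bset {n j : ℕ} (hn : Odd n) (hj : j < 8) :
    #(Aset n j) = #(Bset n ((j + 4) % 8)) :=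
  card_nbij' (· + 4 * n) (· - 4 * n) (fun _ hk => add_four_mul_mem_Bset hn hk)
    (fun _ hk => sub_four_mul_mem_Aset hn hj hk)
    (fun k _ => Nat.add_sub_cancel k (4 * n))
    (fun _ hk => Nat.sub_add_cancel (by have := (mem_Icc.1 (mem_filter.1 hk).1).1; omega))

theorem Aset_union_Bset_eq_image {n j : ℕ} (hj : Odd j) (hj8 : j < 8) :
    Aset n j ∪ Bset n j = {i ∈ range n | (j + 8 * i).Coprime n}.image (j + 8 * ·) := by
  have hj1 := Nat.odd_iff.1 hj
  ext k
  simp only [Aset, Bset, mem_union, mem_filter, mem_Icc, mem_image, mem_range]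
  constructor
  · rintro (⟨hk, hcop, hkj⟩ | ⟨hk, hcop, hkj⟩) <;>
    · refine ⟨k / 8, ⟨by omega, ?_⟩, by omega⟩
      rw [show j + 8 * (k / 8) = k by omega]
      exact Nat.Coprime.coprime_mul_left_right hcop
  · rintro ⟨i, ⟨hi, hcop⟩, rfl⟩
    have hcop2 : (j + 8 * i).Coprime (2 * n) :=
      Nat.Coprime.mul_right (Nat.coprime_two_right.2 (Nat.odd_iff.2 (by omega))) hcop
    by_cases h : j + 8 * i ≤ 4 * n
    · exact Or.inl ⟨⟨by omega, h⟩, hcop2, by omega⟩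
    · exact Or.inr ⟨⟨by omega, by omega⟩, hcop2, by omega⟩

theorem card_Aset_add_card_Bset {n j : ℕ} (hn : Odd n) (hj : Odd j) (hj8 : j < 8) :
    #(Aset n j) + #(Bset n j) = n.totient := by
  rw [← card_union_of_disjoint (disjoint_Aset_Bset n j), Aset_union_Bset_eq_image hj hj8,
    card_image_of_injective _ fun a b h => by simpa using h,
    Nat.card_filter_coprime_add_mul j (Nat.Coprime.pow_left 3 (Nat.coprime_two_left.2 hn))]

theorem AB_card_symmetries_general (n : ℕ) (hodd : Odd n) :
    ((Aset n 1).card = (Aset n 3).card ∧ (Aset n 3).card = (Bset n 5).card ∧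
      (Bset n 5).card = (Bset n 7).card) ∧
    ((Aset n 5).card = (Aset n 7).card ∧ (Aset n 7).card = (Bset n 1).card ∧
      (Bset n 1).card = (Bset n 3).card) ∧
    (∀ j ∈ ({1, 3, 5, 7} : Finset ℕ),
      (Aset n j).card + (Bset n j).card = Nat.totient n) := by
  have h13 : #(Aset n 1) = #(Aset n 3) := card_Aset_eq_card_Aset hodd (by norm_num) (by norm_num)
    rfl
  have h57 : #(Aset n 5) = #(Aset n 7) := card_Aset_eq_card_Aset hodd (by norm_num) (by norm_num)
    rfl
  have h15 : #(Aset n 1) = #(Bset n 5) := card_Aset_eq_card_Bset hodd (by norm_num)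
  have h37 : #(Aset n 3) = #(Bset n 7) := card_Aset_eq_card_Bset hodd (by norm_num)
  have h51 : #(Aset n 5) = #(Bset n 1) := card_Aset_eq_card_Bset hodd (by norm_num)
  have h73 : #(Aset n 7) = #(Bset n 3) := card_Aset_eq_card_Bset hodd (by norm_num)
  refine ⟨⟨h13, by omega, by omega⟩, ⟨h57, by omega, by omega⟩, fun j hj => ?_⟩
  simp only [mem_insert, mem_singleton] at hj
  rcases hj with rfl | rfl | rfl | rfl <;>
    exact card_Aset_add_card_Bset hodd (by decide) (by norm_num)

theorem AB_card_symmetries (n : ℕ) (hn : 0 < n) (hodd : Odd n) :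
    ((Aset n 1).card = (Aset n 3).card ∧ (Aset n 3).card = (Bset n 5).card ∧
      (Bset n 5).card = (Bset n 7).card) ∧
    ((Aset n 5).card = (Aset n 7).card ∧ (Aset n 7).card = (Bset n 1).card ∧
      (Bset n 1).card = (Bset n 3).card) ∧
    (∀ j ∈ ({1, 3, 5, 7} : Finset ℕ),
      (Aset n j).card + (Bset n j).card = Nat.totient n) :=
  AB_card_symmetries_general n hodd
end

section
/- Let E be an algebraically closed field of characteristic zero, G a group, V a finite-dimensional irreducible E-representation of G with dim V ≥ 2, and L a one-dimensional representation of G whose associated linear character χ has finite order N > 1. If V ≅ V ⊗ L as G-representations, then V is induced from a representation of some proper subgroup H of G containing Ker(χ). -/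
/-!
Let `e : V ≃ V ⊗ L` and take an eigenspace `W` of `e`, for an eigenvalue `μ ≠ 0`. Twisting by `χ`
makes `ρ g` carry the `μ`-eigenspace onto the `χ(g) μ`-eigenspace, so `W` is stable under
`Ker χ` and its translates by coset representatives of `G ⧸ Ker χ` are eigenspaces for the
pairwise distinct eigenvalues `χ(g) μ`, hence independent. Their sum is a nonzero
`G`-stable subspace, hence all of `V` by irreducibility; and `Ker χ ≠ G` because `χ ≠ 1`.
-/

namespace Representation

variable {k G V : Type*} [Field k] [Group G] [AddCommGroup V] [Module k V]
  (ρ : Representation k G V)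

theorem iSup_map_eq_top_of_irreducible
    (hirr : ∀ W : Submodule k V, (∀ g : G, ∀ v ∈ W, ρ g v ∈ W) → W = ⊥ ∨ W = ⊤)
    {W : Submodule k V} (hW : W ≠ ⊥) : ⨆ g : G, W.map (ρ g) = ⊤ := by
  have hinv : ∀ g : G, ∀ v ∈ ⨆ g : G, W.map (ρ g), ρ g v ∈ ⨆ g : G, W.map (ρ g) := by
    intro g v hv
    induction hv using Submodule.iSup_induction' with
    | mem g' x hx =>
      obtain ⟨w, hw, rfl⟩ := hx
      exact Submodule.mem_iSup_of_mem (g * g') ⟨w, hw, by rw [map_mul, Module.End.mul_apply]⟩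
    | zero => simp
    | add x y _ _ hx hy => simpa using Submodule.add_mem _ hx hy
  refine (hirr _ hinv).resolve_left fun hbot => hW ?_
  simpa [Module.End.one_eq_id] using (le_iSup (fun g : G => W.map (ρ g)) 1).trans hbot.le

theorem map_le_map_out {H : Subgroup G} {W : Submodule k V}
    (hW : ∀ h ∈ H, ∀ w ∈ W, ρ h w ∈ W) (g : G) :
    W.map (ρ g) ≤ W.map (ρ (Quotient.out (g : G ⧸ H))) := by
  obtain ⟨h, hout⟩ := QuotientGroup.mk_out_eq_mul H g
  rintro _ ⟨w, hw, rfl⟩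
  refine ⟨ρ (h⁻¹ : G) w, hW _ (H.inv_mem h.2) w hw, ?_⟩
  rw [hout, ← Module.End.mul_apply, ← map_mul, mul_inv_cancel_right]

theorem iSup_map_out_eq_top_of_irreducible
    (hirr : ∀ W : Submodule k V, (∀ g : G, ∀ v ∈ W, ρ g v ∈ W) → W = ⊥ ∨ W = ⊤)
    {H : Subgroup G} {W : Submodule k V} (hW : ∀ h ∈ H, ∀ w ∈ W, ρ h w ∈ W) (hW₀ : W ≠ ⊥) :
    ⨆ σ : G ⧸ H, W.map (ρ (Quotient.out σ)) = ⊤ :=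
  top_unique <| (ρ.iSup_map_eq_top_of_irreducible hirr hW₀).ge.trans <|
    iSup_le fun g => (ρ.map_le_map_out hW g).trans
      (le_iSup (fun σ : G ⧸ H => W.map (ρ (Quotient.out σ))) _)

section Twisted

variable {χ : G →* kˣ} {f : Module.End k V}

theorem map_eigenspace_le_of_twisted (hf : ∀ g v, f (ρ g v) = (χ g : k) • ρ g (f v))
    (g : G) (μ : k) : (f.eigenspace μ).map (ρ g) ≤ f.eigenspace (χ g * μ) := by
  rintro _ ⟨v, hv, rfl⟩
  rw [SetLike.mem_coe, Module.End.mem_eigenspace_iff] at hv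
  rw [Module.End.mem_eigenspace_iff, hf, hv, map_smul, smul_smul]

theorem map_eigenspace_of_twisted (hf : ∀ g v, f (ρ g v) = (χ g : k) • ρ g (f v))
    (g : G) (μ : k) : (f.eigenspace μ).map (ρ g) = f.eigenspace (χ g * μ) := by
  refine le_antisymm (ρ.map_eigenspace_le_of_twisted hf g μ) ?_
  calc f.eigenspace (χ g * μ)
      = ((f.eigenspace (χ g * μ)).map (ρ g⁻¹)).map (ρ g) := by
        rw [← Submodule.map_comp, ← Module.End.mul_eq_comp, ← map_mul, mul_inv_cancel, map_one,
          Module.End.one_eq_id, Submodule.map_id]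
    _ ≤ (f.eigenspace μ).map (ρ g) := by
        refine Submodule.map_mono ((ρ.map_eigenspace_le_of_twisted hf g⁻¹ _).trans_eq ?_)
        rw [map_inv, Units.val_inv_eq_inv_val, inv_mul_cancel_left₀ (χ g).ne_zero]

theorem eigenspace_stable_ker_of_twisted (hf : ∀ g v, f (ρ g v) = (χ g : k) • ρ g (f v))
    (μ : k) : ∀ h ∈ χ.ker, ∀ v ∈ f.eigenspace μ, ρ h v ∈ f.eigenspace μ := by
  intro h hh v hv
  simpa [MonoidHom.mem_ker.mp hh] using ρ.map_eigenspace_le_of_twisted hf h μ ⟨v, hv, rfl⟩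

theorem iSupIndep_map_out_eigenspace_of_twisted
    (hf : ∀ g v, f (ρ g v) = (χ g : k) • ρ g (f v)) {μ : k} (hμ : μ ≠ 0) :
    iSupIndep fun σ : G ⧸ χ.ker => (f.eigenspace μ).map (ρ (Quotient.out σ)) := by
  simp_rw [ρ.map_eigenspace_of_twisted hf]
  refine f.eigenspaces_iSupIndep.comp fun a b hab => ?_
  rw [← QuotientGroup.out_eq' a, ← QuotientGroup.out_eq' b]
  exact QuotientGroup.kerLift_injective χ (Units.ext (mul_right_cancel₀ hμ hab))

end Twisted

end Representation

open scoped Classical in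
theorem induced_of_iso_tensor_linear_char_general
    {E : Type} [Field E] [IsAlgClosed E]
    {G : Type} [Group G]
    {V : Type} [AddCommGroup V] [Module E V] [FiniteDimensional E V]
    (ρ : Representation E G V)
    (hdim : 2 ≤ Module.finrank E V)
    (hirr : ∀ W : Submodule E V, (∀ g : G, ∀ v ∈ W, ρ g v ∈ W) → W = ⊥ ∨ W = ⊤)
    (χ : G →* Eˣ) (N : ℕ) (hN : 1 < N) (hord : orderOf χ = N)
    (hiso : ∃ e : V ≃ₗ[E] V, ∀ (g : G) (v : V), e (ρ g v) = (χ g : E) • ρ g (e v)) :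
    ∃ H : Subgroup G, χ.ker ≤ H ∧ H ≠ ⊤ ∧
      ∃ W : Submodule E V, (∀ h ∈ H, ∀ w ∈ W, ρ h w ∈ W) ∧
        DirectSum.IsInternal
          (fun σ : G ⧸ H => Submodule.map (ρ (Quotient.out σ)) W) := by
  obtain ⟨e, he⟩ := hiso
  have : Nontrivial V := Module.nontrivial_of_finrank_pos (R := E) (by omega)
  obtain ⟨μ, hμ⟩ := Module.End.exists_eigenvalue (e : Module.End E V)
  have hμ₀ : μ ≠ 0 := by
    rintro rfl
    exact Module.End.hasEigenvalue_iff.mp hμ (by rw [Module.End.eigenspace_zero]; exact e.ker)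
  have hker : χ.ker ≠ ⊤ := by
    rw [Ne, MonoidHom.ker_eq_top_iff]
    rintro rfl
    rw [orderOf_one] at hord
    omega
  refine ⟨χ.ker, le_rfl, hker, _, ρ.eigenspace_stable_ker_of_twisted he μ, ?_⟩
  -- `convert` reconciles the classical `DecidableEq (G ⧸ χ.ker)` of the statement with the library's
  convert DirectSum.isInternal_submodule_of_iSupIndep_of_iSup_eq_top
    (ρ.iSupIndep_map_out_eigenspace_of_twisted he hμ₀)
    (ρ.iSup_map_out_eq_top_of_irreducible hirr (ρ.eigenspace_stable_ker_of_twisted he μ) hμ)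

open scoped Classical in
theorem induced_of_iso_tensor_linear_char
    {E : Type} [Field E] [IsAlgClosed E] [CharZero E]
    {G : Type} [Group G]
    {V : Type} [AddCommGroup V] [Module E V] [FiniteDimensional E V]
    (ρ : Representation E G V)
    (hdim : 2 ≤ Module.finrank E V)
    (hirr : ∀ W : Submodule E V, (∀ g : G, ∀ v ∈ W, ρ g v ∈ W) → W = ⊥ ∨ W = ⊤)
    (χ : G →* Eˣ) (N : ℕ) (hN : 1 < N) (hord : orderOf χ = N)
    (hiso : ∃ e : V ≃ₗ[E] V, ∀ (g : G) (v : V), e (ρ g v) = (χ g : E) • ρ g (e v)) :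
    ∃ H : Subgroup G, χ.ker ≤ H ∧ H ≠ ⊤ ∧
      ∃ W : Submodule E V, (∀ h ∈ H, ∀ w ∈ W, ρ h w ∈ W) ∧
        DirectSum.IsInternal
          (fun σ : G ⧸ H => Submodule.map (ρ (Quotient.out σ)) W) :=
  induced_of_iso_tensor_linear_char_general ρ hdim hirr χ N hN hord hiso
end

section
/- Let G be a Lie group and H an abstract subgroup of finite index in G. Then H is closed in G. -/
/-!
Let `N` be the normal core of `K`; it has finite index `m`, so the power map `g ↦ g ^ m` sends
`G` into `N`. Its derivative at `1` is `m • id`, which is invertible, so by the inverse function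
theorem its image, and hence `N`, has nonempty interior. Since the model space may have corners,
the inverse function theorem is applied in a chart at an interior point of the model near the
image of `1`, where the derivative is still invertible. A subgroup with an interior point is open,
so `K ⊇ N` is open, and an open subgroup is closed.
-/

open Set Filter Topology

section

variable {𝕜 : Type*} [NontriviallyNormedField 𝕜] {E : Type*} [NormedAddCommGroup E]
  [NormedSpace 𝕜 E] {H : Type*} [TopologicalSpace H] {I : ModelWithCorners 𝕜 E H}
  {G : Type*} [TopologicalSpace G] [ChartedSpace H G] [Monoid G] [ContMDiffMul I 1 G]

theorem hasMFDerivAt_mul_one_one :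
    HasMFDerivAt (I.prod I) I (fun p : G × G => p.1 * p.2) (1, 1)
      (ContinuousLinearMap.fst 𝕜 E E + ContinuousLinearMap.snd 𝕜 E E) := by
  have hmul : MDifferentiableAt (I.prod I) I (fun p : G × G => p.1 * p.2) (1, 1) :=
    (contMDiff_mul I 1).mdifferentiableAt one_ne_zero
  have hright : (fun z : G => z * 1) = id := funext mul_one
  have hleft : (fun z : G => 1 * z) = id := funext one_mul
  have := hmul.hasMFDerivAt
  rwa [mfderiv_prod_eq_add_comp hmul, hright, hleft, mfderiv_id] at this

theorem hasMFDerivAt_pow_one (k : ℕ) :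
    HasMFDerivAt I I (fun g : G => g ^ k) 1 ((k : 𝕜) • ContinuousLinearMap.id 𝕜 E) := by
  induction k with
  | zero =>
    rw [show (fun g : G => g ^ 0) = fun _ => 1 from funext pow_zero, Nat.cast_zero, zero_smul]
    exact hasMFDerivAt_const 1 1
  | succ k ih =>
    have hmul : HasMFDerivAt (I.prod I) I (fun p : G × G => p.1 * p.2) ((1 : G) ^ k, 1)
        (ContinuousLinearMap.fst 𝕜 E E + ContinuousLinearMap.snd 𝕜 E E) := by
      rw [one_pow]; exact hasMFDerivAt_mul_one_one
    have hcomp :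
        (fun g : G => g ^ (k + 1)) = (fun p : G × G => p.1 * p.2) ∘ fun g => (g ^ k, g) :=
      funext fun g => pow_succ g k
    rw [hcomp]
    have hpair : HasMFDerivAt I (I.prod I) (fun g : G => (g ^ k, g)) 1
        (((k : 𝕜) • ContinuousLinearMap.id 𝕜 E).prod (ContinuousLinearMap.id 𝕜 E)) :=
      ih.prodMk (hasMFDerivAt_id 1)
    refine (hmul.comp (f := fun g : G => (g ^ k, g)) 1 hpair).congr_mfderiv ?_
    ext v
    simp only [Nat.cast_succ, add_smul, one_smul]
    rfl

end

theorem nonempty_interior_image_of_hasFDerivWithinAt_isInvertible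
    {E F : Type*} [NormedAddCommGroup E] [NormedSpace ℝ E] [CompleteSpace E]
    [NormedAddCommGroup F] [NormedSpace ℝ F] {f : E → F} {f' : E →L[ℝ] F}
    {s U : Set E} {x : E} (hf : ContDiffWithinAt ℝ 1 f s x) (hf' : HasFDerivWithinAt f f' s x)
    (hf'inv : f'.IsInvertible) (hs : UniqueDiffOn ℝ s) (hx : x ∈ s)
    (hx_int : x ∈ closure (interior s)) (hU : U ∈ 𝓝[s] x) :
    (interior (f '' U)).Nonempty := by
  obtain ⟨u, hu, hxu, hfu⟩ := hf.contDiffOn' le_rfl (by simp)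
  rw [insert_eq_of_mem hx] at hfu
  obtain ⟨v, hv, hxv, hvU⟩ := mem_nhdsWithin.1 hU
  set t := s ∩ (u ∩ v)
  have ht : UniqueDiffOn ℝ t := hs.inter (hu.inter hv)
  have hxt : x ∈ t := ⟨hx, hxu, hxv⟩
  have hft : ContDiffOn ℝ 1 f t := hfu.mono fun y hy => ⟨hy.1, hy.2.1⟩
  have hderiv_x : fderivWithin ℝ f t x = f' :=
    (hf'.mono inter_subset_left).fderivWithin (ht x hxt)
  have hinv_near : {y | (fderivWithin ℝ f t y).IsInvertible} ∈ 𝓝[t] x :=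
    (hft.continuousOn_fderivWithin ht le_rfl x hxt).preimage_mem_nhdsWithin
      (ContinuousLinearEquiv.isOpen.mem_nhds (hderiv_x ▸ hf'inv))
  obtain ⟨w, hw, hxw, hwinv⟩ := mem_nhdsWithin.1 hinv_near
  obtain ⟨y, hyuvw, hys⟩ := mem_closure_iff.1 hx_int (u ∩ v ∩ w)
    ((hu.inter hv).inter hw) ⟨⟨hxu, hxv⟩, hxw⟩
  set O := interior s ∩ (u ∩ v)
  have hO : IsOpen O := isOpen_interior.inter (hu.inter hv)
  have hyO : y ∈ O := ⟨hys, hyuvw.1⟩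
  have hOt : O ⊆ t := fun z hz => ⟨interior_subset hz.1, hz.2⟩
  have ht_nhds : t ∈ 𝓝 y := mem_of_superset (hO.mem_nhds hyO) hOt
  obtain ⟨A, hA⟩ : (fderiv ℝ f y).IsInvertible := by
    rw [← fderivWithin_of_mem_nhds ht_nhds]
    exact hwinv ⟨hyuvw.2, hOt hyO⟩
  have hstrict : HasStrictFDerivAt f (A : E →L[ℝ] F) y :=
    hA ▸ (hft.contDiffAt ht_nhds).hasStrictFDerivAt one_ne_zero
  have hOU : O ⊆ U := fun z hz => hvU ⟨hz.2.2, interior_subset hz.1⟩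
  refine ⟨f y, mem_interior_iff_mem_nhds.2 ?_⟩
  rw [← hstrict.map_nhds_eq_of_equiv]
  exact mem_of_superset (image_mem_map (hO.mem_nhds hyO)) (image_mono hOU)

theorem nonempty_interior_image_of_hasMFDerivAt_isInvertible
    {E : Type*} [NormedAddCommGroup E] [NormedSpace ℝ E] [CompleteSpace E]
    {H : Type*} [TopologicalSpace H] {I : ModelWithCorners ℝ E H}
    {M : Type*} [TopologicalSpace M] [ChartedSpace H M]
    {E' : Type*} [NormedAddCommGroup E'] [NormedSpace ℝ E']
    {H' : Type*} [TopologicalSpace H'] {I' : ModelWithCorners ℝ E' H'}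
    {M' : Type*} [TopologicalSpace M'] [ChartedSpace H' M']
    {f : M → M'} {x : M} {f' : TangentSpace I x →L[ℝ] TangentSpace I' (f x)} {U : Set M}
    (hf : ContMDiffAt I I' 1 f x) (hf' : HasMFDerivAt I I' f x f') (hf'inv : f'.IsInvertible)
    (hU : U ∈ 𝓝 x) :
    (interior (f '' U)).Nonempty := by
  set φ := extChartAt I x
  set ψ := extChartAt I' (f x)
  set U' := φ.target ∩ φ.symm ⁻¹' (U ∩ f ⁻¹' ψ.source)
  have hU' : U' ∈ 𝓝[range I] (φ x) := by
    refine inter_mem (extChartAt_target_mem_nhdsWithin x) ?_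
    rw [← mem_map, map_extChartAt_symm_nhdsWithin_range]
    exact inter_mem hU (hf.continuousAt.preimage_mem_nhds (extChartAt_source_mem_nhds (f x)))
  obtain ⟨z, hz⟩ := nonempty_interior_image_of_hasFDerivWithinAt_isInvertible
    (contMDiffAt_iff.1 hf).2 hf'.2 hf'inv I.uniqueDiffOn (mem_range_self _)
    (I.range_eq_closure_interior ▸ mem_range_self _) hU'
  obtain ⟨a, ⟨-, haU, ha_src⟩, rfl⟩ := interior_subset hz
  set V := ψ.source ∩ ψ ⁻¹' interior (writtenInExtChartAt I I' x f '' U')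
  have hV : IsOpen V :=
    (continuousOn_extChartAt (f x)).isOpen_inter_preimage (isOpen_extChartAt_source _)
      isOpen_interior
  have hVU : V ⊆ f '' U := by
    rintro g ⟨hg_src, hg⟩
    obtain ⟨b, ⟨-, hbU, hb_src⟩, hb⟩ := interior_subset hg
    exact ⟨φ.symm b, hbU, ψ.injOn hb_src hg_src hb⟩
  exact ⟨f (φ.symm a), interior_maximal hVU hV ⟨ha_src, hz⟩⟩

theorem finite_index_subgroup_isClosed_of_lieGroup
    {E : Type} [NormedAddCommGroup E] [NormedSpace ℝ E] [FiniteDimensional ℝ E]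
    {H : Type} [TopologicalSpace H] (I : ModelWithCorners ℝ E H)
    {G : Type} [TopologicalSpace G] [ChartedSpace H G] [Group G] [LieGroup I (⊤ : ℕ∞) G]
    (K : Subgroup G) (hK : K.index ≠ 0) :
    IsClosed (K : Set G) := by
  have : ContinuousMul G := continuousMul_of_contMDiffMul I (⊤ : ℕ∞)
  have : K.FiniteIndex := ⟨hK⟩
  set N := K.normalCore
  have hm : (N.index : ℝ) ≠ 0 := Nat.cast_ne_zero.2 Subgroup.FiniteIndex.index_ne_zero
  have hinv : ((N.index : ℝ) • ContinuousLinearMap.id ℝ E).IsInvertible :=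
    ⟨ContinuousLinearEquiv.smulLeft (Units.mk0 _ hm), by ext; simp⟩
  obtain ⟨g, hg⟩ := nonempty_interior_image_of_hasMFDerivAt_isInvertible
    (contMDiff_pow (I := I) (G := G) (n := 1) N.index).contMDiffAt
    (hasMFDerivAt_pow_one N.index) hinv univ_mem
  have hpow : range (fun g : G => g ^ N.index) ⊆ N := range_subset_iff.2 N.pow_index_mem
  rw [image_univ, mem_interior_iff_mem_nhds] at hg
  have hN : IsOpen (N : Set G) := N.isOpen_of_mem_nhds (mem_of_superset hg hpow)
  exact K.isClosed_of_isOpen (Subgroup.isOpen_mono K.normalCore_le hN)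
end
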